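/- Let α > 0, a > 0, b > 0, β > 0 and let f be the OGE-LFR probability density function. For every x > 0, the derivative f'(x) vanishes if and only if 1 + b (a + b x)^{-2} - α exp(a x + (b/2) x²) · (1 - (β - 1) / (exp(α(exp(a x + (b/2) x²) - 1)) - 1)) = 0. -/

import Mathlib

/-- The OGE-LFR probability density function. -/
noncomputable def ogeLfrPdf (α a b β x : ℝ) : ℝ :=
  α * β * (a + b * x) * Real.exp (a * x + b / 2 * x ^ 2) *
    Real.exp (-α * (Real.exp (a * x + b / 2 * x ^ 2) - 1)) *
    (1 - Real.exp (-α * (Real.exp (a * x + b / 2 * x ^ 2) - 1))) ^ (β - 1)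

/-!
The density is positive on `(0, ∞)`, so `f'` vanishes exactly where the logarithmic derivative
`f' / f` does. Writing `H x = a x + (b/2) x²` and `u = α (e^H - 1)`, the density is a product of
`a + b x`, `e^H`, `e^{-u}` and `(1 - e^{-u})^{β-1}`, whose logarithmic derivatives are
`b / H'`, `H'`, `-α e^H H'` and `(β - 1) α e^H H' / (e^u - 1)`; their sum is `H'` times the
expression of the mode equation, and `H' = a + b x > 0`.
-/

open Real

noncomputable def ogeLfrModeFun (α a b β x : ℝ) : ℝ :=
  1 + b * ((a + b * x) ^ 2)⁻¹ -
    α * exp (a * x + b / 2 * x ^ 2) *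
      (1 - (β - 1) / (exp (α * (exp (a * x + b / 2 * x ^ 2) - 1)) - 1))

theorem HasDerivAt.mul_logDeriv {𝕜 : Type*} [NontriviallyNormedField 𝕜] {f g : 𝕜 → 𝕜}
    {x p q : 𝕜} (hf : HasDerivAt f (f x * p) x) (hg : HasDerivAt g (g x * q) x) :
    HasDerivAt (fun y => f y * g y) (f x * g x * (p + q)) x :=
  (hf.mul hg).congr_deriv (by ring)

theorem HasDerivAt.one_sub_exp_neg_rpow {u : ℝ → ℝ} {u' x : ℝ} (hu : HasDerivAt u u' x)
    (hux : u x ≠ 0) (p : ℝ) :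
    HasDerivAt (fun y => (1 - Real.exp (-u y)) ^ p)
      ((1 - Real.exp (-u x)) ^ p * (p * u' / (Real.exp (u x) - 1))) x := by
  have hbase : 1 - Real.exp (-u x) ≠ 0 := by
    rw [sub_ne_zero, ne_comm, Ne, Real.exp_eq_one_iff, neg_eq_zero]
    exact hux
  have hneg : HasDerivAt (fun y => -u y) (-u') x := hu.neg
  refine ((hneg.exp.const_sub 1).rpow_const (Or.inl hbase)).congr_deriv ?_
  rw [Real.rpow_sub_one hbase]
  rw [Real.exp_neg] at hbase ⊢
  field_simp

theorem hasDerivAt_ogeLfrPdf {α a b β x : ℝ} (hα : α ≠ 0) (hd : a + b * x ≠ 0)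
    (hH : a * x + b / 2 * x ^ 2 ≠ 0) :
    HasDerivAt (ogeLfrPdf α a b β)
      (ogeLfrPdf α a b β x * ((a + b * x) * ogeLfrModeFun α a b β x)) x := by
  have hconst : HasDerivAt (fun _ => α * β) (α * β * 0) x :=
    (hasDerivAt_const x (α * β)).congr_deriv (mul_zero _).symm
  have hlin : HasDerivAt (fun y => a + b * y) ((a + b * x) * (b / (a + b * x))) x := by
    rw [mul_div_cancel₀ _ hd]
    simpa using ((hasDerivAt_id x).const_mul b).const_add a
  have hH' : HasDerivAt (fun y => a * y + b / 2 * y ^ 2) (a + b * x) x := by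
    have := ((hasDerivAt_id x).const_mul a).add ((hasDerivAt_pow 2 x).const_mul (b / 2))
    exact this.congr_deriv (by ring)
  have hu := (hH'.exp.sub_const 1).const_mul α
  have hux : α * (exp (a * x + b / 2 * x ^ 2) - 1) ≠ 0 :=
    mul_ne_zero hα (sub_ne_zero.2 (by rwa [Ne, exp_eq_one_iff]))
  have hneg : HasDerivAt (fun y => -(α * (exp (a * y + b / 2 * y ^ 2) - 1)))
      (-(α * (exp (a * x + b / 2 * x ^ 2) * (a + b * x)))) x := hu.neg
  have hprod := (((hconst.mul_logDeriv hlin).mul_logDeriv hH'.exp).mul_logDeriv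
    hneg.exp).mul_logDeriv (hu.one_sub_exp_neg_rpow hux (β - 1))
  refine (hprod.congr_deriv ?_).congr_of_eventuallyEq
    (Filter.Eventually.of_forall fun y => by simp only [ogeLfrPdf, neg_mul])
  simp only [ogeLfrPdf, ogeLfrModeFun, neg_mul]
  field_simp
  ring

theorem ogeLfrPdf_pos {α a b β x : ℝ} (hα : 0 < α) (hβ : 0 < β) (hd : 0 < a + b * x)
    (hH : 0 < a * x + b / 2 * x ^ 2) : 0 < ogeLfrPdf α a b β x := by
  have hbase : 0 < 1 - exp (-α * (exp (a * x + b / 2 * x ^ 2) - 1)) := by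
    have hE : 0 < exp (a * x + b / 2 * x ^ 2) - 1 := sub_pos.2 (one_lt_exp_iff.2 hH)
    rw [sub_pos, exp_lt_one_iff, neg_mul, neg_neg_iff_pos]
    positivity
  unfold ogeLfrPdf
  positivity

/-- For x > 0 the derivative of the OGE-LFR pdf vanishes iff
`1 + b(a+bx)^{-2} - α e^{ax+(b/2)x²}(1 - (β-1)/(e^{α(e^{ax+(b/2)x²}-1)} - 1)) = 0`. -/
theorem ogeLfr_mode_equation (α a b β : ℝ) (hα : 0 < α) (ha : 0 < a) (hb : 0 < b)
    (hβ : 0 < β) (x : ℝ) (hx : 0 < x) :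
    deriv (ogeLfrPdf α a b β) x = 0 ↔
      1 + b * ((a + b * x) ^ 2)⁻¹ -
        α * Real.exp (a * x + b / 2 * x ^ 2) *
          (1 - (β - 1) /
            (Real.exp (α * (Real.exp (a * x + b / 2 * x ^ 2) - 1)) - 1)) = 0 := by
  have hd : 0 < a + b * x := by positivity
  have hH : 0 < a * x + b / 2 * x ^ 2 := by positivity
  rw [(hasDerivAt_ogeLfrPdf hα.ne' hd.ne' hH.ne').deriv, mul_eq_zero, mul_eq_zero,
    or_iff_right (ogeLfrPdf_pos hα hβ hd hH).ne', or_iff_right hd.ne']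
  rfl
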